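/- Let ℓ ≥ 1 be an integer, let c ≥ 1 be a real number, and let 𝒟 be a finite family of closed disks in ℝ² of common radius c whose union is contained in an axis-aligned rectangle of width at most ℓ − 1. Then the intersection graph G of 𝒟 has a tree decomposition 𝒯 with independence number α(𝒯) ≤ 2·⌈ℓ/c⌉; in particular, tree-α(G) ≤ 2·⌈ℓ/c⌉. -/

import Mathlib

open Classical

/-- A tree decomposition of a graph `G`. -/
structure TreeDecomp {V : Type*} (G : SimpleGraph V) where
  ι : Type
  fin : Fintype ι
  T : SimpleGraph ι
  isTree : T.IsTree
  bag : ι → Set V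
  mem_bag : ∀ v : V, ∃ t, v ∈ bag t
  edge_bag : ∀ ⦃u v : V⦄, G.Adj u v → ∃ t, u ∈ bag t ∧ v ∈ bag t
  bag_connected : ∀ v : V, (T.induce {t | v ∈ bag t}).Connected

/-- `I` is an independent set of `G` contained in `S`, i.e. an independent set of `G[S]`. -/
def IsIndepSetIn {V : Type*} (G : SimpleGraph V) (S : Set V) (I : Finset V) : Prop :=
  ↑I ⊆ S ∧ ∀ u ∈ I, ∀ v ∈ I, u ≠ v → ¬ G.Adj u v

/-- `α(G[S]) ≤ k`. -/
def IndepLE {V : Type*} (G : SimpleGraph V) (S : Set V) (k : ℕ) : Prop :=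
  ∀ I : Finset V, IsIndepSetIn G S I → I.card ≤ k

/-- The independence number of the tree decomposition is at most `k`. -/
def TreeDecomp.IndepNumLE {V : Type*} {G : SimpleGraph V} (td : TreeDecomp G) (k : ℕ) : Prop :=
  ∀ t : td.ι, IndepLE G (td.bag t) k

/-- The tree-independence number of `G` is at most `k`. -/
def treeAlphaLE {V : Type*} (G : SimpleGraph V) (k : ℕ) : Prop :=
  ∃ td : TreeDecomp G, td.IndepNumLE k

/-- The tree-independence number of `G`. -/
noncomputable def treeAlpha {V : Type*} (G : SimpleGraph V) : ℕ :=
  sInf {k | treeAlphaLE G k}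

/-- A layering of `G`, encoded by the function sending a vertex to the index of its layer. -/
def IsLayering {V : Type*} (G : SimpleGraph V) (L : V → ℕ) : Prop :=
  ∀ ⦃u v : V⦄, G.Adj u v → (L u : ℤ) ≤ (L v : ℤ) + 1

/-- The layered tree-independence number of `G` is at most `k`. -/
def layeredTreeAlphaLE {V : Type*} (G : SimpleGraph V) (k : ℕ) : Prop :=
  ∃ (td : TreeDecomp G) (L : V → ℕ), IsLayering G L ∧
    ∀ (t : td.ι) (i : ℕ), IndepLE G (td.bag t ∩ {v | L v = i}) k

/-- The layered tree-independence number of `G`. -/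
noncomputable def layeredTreeAlpha {V : Type*} (G : SimpleGraph V) : ℕ :=
  sInf {k | layeredTreeAlphaLE G k}

/-- The number of elements of the multiset `𝒞` containing `v` (with multiplicity). -/
noncomputable def coverCount {V : Type*} (𝒞 : Multiset (Set V)) (v : V) : ℕ :=
  Multiset.countP (fun C => v ∈ C) 𝒞

/-- `𝒞` is a `β`-general cover: every vertex belongs to at least `β·|𝒞|` elements. -/
def IsGeneralCover {V : Type*} (β : ℝ) (𝒞 : Multiset (Set V)) : Prop :=
  𝒞 ≠ 0 ∧ ∀ v : V, β * (Multiset.card 𝒞 : ℝ) ≤ (coverCount 𝒞 v : ℝ)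

/-- The intersection graph of an (indexed) family of sets. -/
def intersectionGraph {ι : Type*} {α : Type*} (D : ι → Set α) : SimpleGraph ι where
  Adj i j := i ≠ j ∧ (D i ∩ D j).Nonempty
  symm := by
    constructor
    rintro i j ⟨hne, x, hx1, hx2⟩
    exact ⟨hne.symm, x, hx2, hx1⟩
  loopless := by
    constructor
    rintro i ⟨hne, -⟩
    exact hne rfl

/-- The `p`-th power of a graph. -/
def gpower {V : Type*} (G : SimpleGraph V) (p : ℕ) : SimpleGraph V where
  Adj u v := u ≠ v ∧ ∃ w : G.Walk u v, w.length ≤ p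
  symm := by
    constructor
    rintro u v ⟨hne, w, hw⟩
    exact ⟨hne.symm, w.reverse, by simpa using hw⟩
  loopless := by
    constructor
    rintro u ⟨hne, -⟩
    exact hne rfl

/-- The axis-aligned closed hypercube of side length `r` with lower corner `x`. -/
def cube (d : ℕ) (x : EuclideanSpace ℝ (Fin d)) (r : ℝ) : Set (EuclideanSpace ℝ (Fin d)) :=
  {y | ∀ i, x i ≤ y i ∧ y i ≤ x i + r}

/-- The size of an object: the side length of its smallest enclosing axis-aligned hypercube. -/
noncomputable def objSize (d : ℕ) (O : Set (EuclideanSpace ℝ (Fin d))) : ℝ :=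
  sInf {r : ℝ | 0 ≤ r ∧ ∃ x, O ⊆ cube d x r}

/-- The collection `O` is `c`-fat. -/
def IsFat {ι : Type*} (d : ℕ) (c : ℝ) (O : ι → Set (EuclideanSpace ℝ (Fin d))) : Prop :=
  ∀ r : ℝ, 0 < r → ∀ x : EuclideanSpace ℝ (Fin d), ∀ P : Finset ι,
    (∀ i ∈ P, ∀ j ∈ P, i ≠ j → Disjoint (O i) (O j)) →
    (∀ i ∈ P, (O i ∩ cube d x r).Nonempty ∧ r ≤ objSize d (O i)) →
    ∃ pts : Finset (EuclideanSpace ℝ (Fin d)),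
      (pts.card : ℝ) ≤ c ∧ ∀ i ∈ P, ∃ p ∈ pts, p ∈ O i

/-- The `n`-dimensional grid graph of width `n`. -/
def gridGraphN (n : ℕ) : SimpleGraph (Fin n → Fin n) where
  Adj a b := ∑ i, ((a i : ℤ) - (b i : ℤ)).natAbs = 1
  symm := by
    constructor
    intro a b h
    rw [← h]
    exact Finset.sum_congr rfl fun i _ => by omega
  loopless := by
    constructor
    intro a h
    simp at h

/-- The grid graph on `ℤ²`. -/
def latticeGraph : SimpleGraph (ℤ × ℤ) where
  Adj p q := (p.1 - q.1).natAbs + (p.2 - q.2).natAbs = 1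
  symm := by
    constructor
    intro p q h
    omega
  loopless := by
    constructor
    intro p h
    simp at h

/-- `P` is (the vertex set of) a path on the integer grid: a finite nonempty subset of `ℤ²`
whose induced subgraph in the grid graph is a path. -/
def IsGridPath (P : Set (ℤ × ℤ)) : Prop :=
  P.Finite ∧ P.Nonempty ∧ (latticeGraph.induce P).IsTree ∧
    ∀ v : P, ((latticeGraph.induce P).neighborSet v).ncard ≤ 2

/-!
Bags of a path decomposition are horizontal strips of height `3c`, one starting at each multiple
of `c`: intersecting disks have centres at vertical distance at most `2c`, so both lie in the strip
starting at `⌊y/c⌋·c`, where `y` is the height of the lower centre. Cut a strip into cells of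
width `c` and height `3c/2`; two centres in one cell are at distance `< √(c² + 9c²/4) < 2c`, so
their disks meet. An independent set in a bag therefore has at most one disk per cell, and the
centres occupy at most `2⌈ℓ/c⌉` cells because they lie in an `x`-interval of length `ℓ - 1 < ℓ`.
-/

namespace SimpleGraph

lemma pathGraph_deleteEdges_walk_le_iff {n : ℕ} {u w : Fin n} (huw : w.val = u.val + 1)
    {a b : Fin n} (p : ((pathGraph n).deleteEdges {s(u, w)}).Walk a b) : a ≤ u ↔ b ≤ u := by
  induction p with
  | nil => rfl
  | cons hxy _ ih =>
    refine Iff.trans ?_ ih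
    rw [deleteEdges_adj, pathGraph_adj, Set.mem_singleton_iff, Sym2.eq_iff] at hxy
    simp only [Fin.ext_iff, Fin.le_def] at hxy ⊢
    omega

lemma pathGraph_isTree (n : ℕ) : (pathGraph (n + 1)).IsTree := by
  refine ⟨pathGraph_connected n, isAcyclic_iff_forall_adj_isBridge.mpr ?_⟩
  have bridge : ∀ u w : Fin (n + 1), w.val = u.val + 1 → (pathGraph (n + 1)).IsBridge s(u, w) :=
    fun u w huw ⟨p⟩ => by
      have := pathGraph_deleteEdges_walk_le_iff huw p
      simp only [le_refl, true_iff, Fin.le_def] at this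
      omega
  intro u w huw
  rcases pathGraph_adj.mp huw with h | h
  · exact bridge u w h.symm
  · exact Sym2.eq_swap ▸ bridge w u h.symm

lemma induce_pathGraph_connected {n : ℕ} {S : Set (Fin n)} (hS : S.OrdConnected)
    (hne : S.Nonempty) : ((pathGraph n).induce S).Connected := by
  have : Nonempty S := hne.to_subtype
  have step : ∀ d : ℕ, ∀ u v : S, v.1.val = u.1.val + d →
      ((pathGraph n).induce S).Reachable u v := by
    intro d
    induction d with
    | zero => exact fun u v h => (Subtype.ext (Fin.ext h.symm)) ▸ Reachable.rfl
    | succ d ih =>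
      intro u v h
      let u' : Fin n := ⟨u.1.val + 1, by omega⟩
      have hu' : u' ∈ S := hS.out u.2 v.2 ⟨Fin.le_def.mpr (by simp [u']),
        Fin.le_def.mpr (by simp only [u']; omega)⟩
      have hadj : ((pathGraph n).induce S).Adj u ⟨u', hu'⟩ := by
        simp [pathGraph_adj, u']
      exact hadj.reachable.trans (ih _ v (by simp only [u']; omega))
  refine ⟨fun u v => ?_⟩
  rcases le_total u.1.val v.1.val with h | h
  · exact step _ u v (Nat.add_sub_cancel' h).symm
  · exact (step _ v u (Nat.add_sub_cancel' h).symm).symm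

end SimpleGraph

open SimpleGraph

def TreeDecomp.ofPath {V : Type*} {G : SimpleGraph V} (n : ℕ) (bag : Fin (n + 1) → Set V)
    (mem_bag : ∀ v, ∃ t, v ∈ bag t)
    (edge_bag : ∀ ⦃u v⦄, G.Adj u v → ∃ t, u ∈ bag t ∧ v ∈ bag t)
    (ordConnected_bag : ∀ v, {t | v ∈ bag t}.OrdConnected) : TreeDecomp G where
  ι := Fin (n + 1)
  fin := inferInstance
  T := pathGraph (n + 1)
  isTree := pathGraph_isTree n
  bag := bag
  mem_bag := mem_bag
  edge_bag := edge_bag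
  bag_connected v := induce_pathGraph_connected (ordConnected_bag v) (mem_bag v)

theorem exists_treeDecomp_bag_subset_preimage_Ico {V : Type*} [Fintype V] {G : SimpleGraph V}
    (f : V → ℝ) {h : ℝ} (hh : 0 ≤ h) (hf : ∀ ⦃u v⦄, G.Adj u v → |f u - f v| ≤ h) :
    ∃ td : TreeDecomp G, ∀ t, ∃ a : ℤ, td.bag t ⊆ f ⁻¹' Set.Ico (a : ℝ) (a + h + 1) := by
  set M := Finset.univ.sup fun v => ⌊f v⌋.natAbs
  have hM : ∀ v, ⌊f v⌋.natAbs ≤ M := fun v =>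
    Finset.le_sup (f := fun v => ⌊f v⌋.natAbs) (Finset.mem_univ v)
  let level : Fin (2 * M + 1) → ℤ := fun t => t - M
  let bag : Fin (2 * M + 1) → Set V := fun t => f ⁻¹' Set.Ico (level t : ℝ) (level t + h + 1)
  let idx : V → Fin (2 * M + 1) := fun v => ⟨(⌊f v⌋ + M).toNat, by have := hM v; omega⟩
  have level_idx : ∀ v, level (idx v) = ⌊f v⌋ := fun v => by
    have := hM v; simp only [level, idx]; omega
  have mem_idx : ∀ v, v ∈ bag (idx v) := fun v => by
    simp only [bag, Set.mem_preimage, Set.mem_Ico, level_idx]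
    exact ⟨Int.floor_le _, by linarith [Int.lt_floor_add_one (f v)]⟩
  refine ⟨TreeDecomp.ofPath (2 * M) bag (fun v => ⟨idx v, mem_idx v⟩) ?_ ?_,
    fun t => ⟨level t, subset_rfl⟩⟩
  · intro u v huv
    wlog hle : f u ≤ f v generalizing u v
    · obtain ⟨t, hv, hu⟩ := this huv.symm (le_of_not_ge hle)
      exact ⟨t, hu, hv⟩
    have hvu := (abs_le.mp (hf huv)).1
    refine ⟨idx u, mem_idx u, ?_⟩
    simp only [bag, Set.mem_preimage, Set.mem_Ico, level_idx]
    constructor <;> linarith [Int.floor_le (f u), Int.lt_floor_add_one (f u)]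
  · intro v
    refine ⟨fun a ha b hb t ⟨hat, htb⟩ => ?_⟩
    have hat : (level a : ℝ) ≤ level t := Int.cast_le.mpr (by simp only [level]; omega)
    have htb : (level t : ℝ) ≤ level b := Int.cast_le.mpr (by simp only [level]; omega)
    simp only [bag, Set.mem_ofPred_eq, Set.mem_preimage, Set.mem_Ico] at ha hb ⊢
    constructor <;> linarith

lemma abs_sub_lt_of_floor_div_eq {a b x₀ s : ℝ} (hs : 0 < s)
    (h : ⌊(a - x₀) / s⌋ = ⌊(b - x₀) / s⌋) : |a - b| < s := by
  have := Int.abs_sub_lt_one_of_floor_eq_floor h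
  rwa [← sub_div, sub_sub_sub_cancel_right, abs_div, abs_of_pos hs, div_lt_one hs] at this

lemma floor_div_mem_Ico {a x₀ W s : ℝ} (hs : 0 < s) (ha : a ∈ Set.Ico x₀ (x₀ + W)) :
    ⌊(a - x₀) / s⌋ ∈ Finset.Ico 0 ⌈W / s⌉ := by
  obtain ⟨h₀, h₁⟩ := ha
  rw [Finset.mem_Ico, Int.floor_nonneg, Int.floor_lt]
  exact ⟨div_nonneg (sub_nonneg.mpr h₀) hs.le,
    (div_lt_div_of_pos_right (by linarith) hs).trans_le (Int.le_ceil _)⟩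

lemma EuclideanSpace.dist_lt_two_mul_of_abs_sub_lt {p q : EuclideanSpace ℝ (Fin 2)} {c : ℝ}
    (h₀ : |p 0 - q 0| < c) (h₁ : |p 1 - q 1| < 3 * c / 2) : dist p q < 2 * c := by
  have hc : 0 < c := (abs_nonneg _).trans_lt h₀
  have hsq : dist p q ^ 2 = (p 0 - q 0) ^ 2 + (p 1 - q 1) ^ 2 := by
    rw [EuclideanSpace.dist_sq_eq, Fin.sum_univ_two, Real.dist_eq, Real.dist_eq, sq_abs, sq_abs]
  have h₀' := sq_lt_sq' (abs_lt.mp h₀).1 (abs_lt.mp h₀).2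
  have h₁' := sq_lt_sq' (abs_lt.mp h₁).1 (abs_lt.mp h₁).2
  nlinarith [dist_nonneg (x := p) (y := q)]

theorem card_le_of_two_mul_lt_dist {ι : Type*} {c W x₀ y₀ : ℝ} (hc : 0 < c)
    (p : ι → EuclideanSpace ℝ (Fin 2)) (I : Finset ι)
    (hx : ∀ i ∈ I, p i 0 ∈ Set.Ico x₀ (x₀ + W)) (hy : ∀ i ∈ I, p i 1 ∈ Set.Ico y₀ (y₀ + 3 * c))
    (hsep : ∀ i ∈ I, ∀ j ∈ I, i ≠ j → 2 * c < dist (p i) (p j)) :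
    I.card ≤ (2 * ⌈W / c⌉).toNat := by
  have hs : 0 < 3 * c / 2 := by positivity
  let cell : ι → ℤ × ℤ := fun i => (⌊(p i 0 - x₀) / c⌋, ⌊(p i 1 - y₀) / (3 * c / 2)⌋)
  have maps : Set.MapsTo cell I
      (Finset.Ico 0 ⌈W / c⌉ ×ˢ Finset.Ico 0 ⌈3 * c / (3 * c / 2)⌉ : Finset (ℤ × ℤ)) :=
    fun i hi => Finset.mem_product.mpr
      ⟨floor_div_mem_Ico hc (hx i hi), floor_div_mem_Ico hs (hy i hi)⟩
  have inj : Set.InjOn cell I := by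
    intro i hi j hj hij
    by_contra hne
    simp only [cell, Prod.mk.injEq] at hij
    exact (hsep i hi j hj hne).not_gt <| EuclideanSpace.dist_lt_two_mul_of_abs_sub_lt
      (abs_sub_lt_of_floor_div_eq hc hij.1) (abs_sub_lt_of_floor_div_eq hs hij.2)
  have htwo : ⌈3 * c / (3 * c / 2)⌉ = 2 := by
    rw [show 3 * c / (3 * c / 2) = 2 by field_simp]; simp
  have := Finset.card_le_card_of_injOn cell maps inj
  rw [Finset.card_product, Int.card_Ico, Int.card_Ico, htwo, sub_zero, sub_zero,
    show (2 : ℤ).toNat = 2 from rfl] at this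
  omega

lemma intersectionGraph_closedBall_adj_iff {ι E : Type*} [NormedAddCommGroup E] [NormedSpace ℝ E]
    {c : ℝ} (hc : 0 ≤ c) (ctr : ι → E) {i j : ι} :
    (intersectionGraph fun i => Metric.closedBall (ctr i) c).Adj i j ↔
      i ≠ j ∧ dist (ctr i) (ctr j) ≤ 2 * c := by
  change i ≠ j ∧ _ ↔ _
  rw [← Set.not_disjoint_iff_nonempty_inter, disjoint_closedBall_closedBall_iff hc hc, not_lt,
    two_mul]

theorem stmt17_general {ι : Type} [Fintype ι] (l : ℕ) (c : ℝ) (hc : 1 ≤ c)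
    (ctr : ι → EuclideanSpace ℝ (Fin 2)) (x₀ : ℝ)
    (hwidth : ∀ i, ∀ p ∈ Metric.closedBall (ctr i) c,
      x₀ ≤ p 0 ∧ p 0 ≤ x₀ + ((l : ℝ) - 1)) :
    ∃ td : TreeDecomp (intersectionGraph fun i => Metric.closedBall (ctr i) c),
      td.IndepNumLE (2 * ⌈(l : ℝ) / c⌉).toNat ∧
      treeAlpha (intersectionGraph fun i => Metric.closedBall (ctr i) c) ≤
        (2 * ⌈(l : ℝ) / c⌉).toNat := by
  have hc₀ : 0 < c := one_pos.trans_le hc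
  have hadj := fun i j => intersectionGraph_closedBall_adj_iff hc₀.le ctr (i := i) (j := j)
  obtain ⟨td, htd⟩ := exists_treeDecomp_bag_subset_preimage_Ico (fun i => ctr i 1 / c)
    zero_le_two fun u v huv => by
      rw [← sub_div, abs_div, abs_of_pos hc₀, div_le_iff₀ hc₀, ← Real.dist_eq]
      exact (PiLp.dist_apply_le _ _ 1).trans ((hadj u v).mp huv).2
  have hbound : td.IndepNumLE (2 * ⌈(l : ℝ) / c⌉).toNat := by
    rintro t I ⟨hsub, hind⟩
    obtain ⟨a, ha⟩ := htd t
    refine card_le_of_two_mul_lt_dist (x₀ := x₀) (y₀ := a * c) hc₀ ctr I (fun i _ => ?_)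
      (fun i hi => ?_) (fun i hi j hj hij => ?_)
    · obtain ⟨h₀, h₁⟩ := hwidth i (ctr i) (Metric.mem_closedBall_self hc₀.le)
      exact ⟨h₀, by linarith⟩
    · obtain ⟨h₀, h₁⟩ := ha (hsub hi)
      rw [le_div_iff₀ hc₀] at h₀
      rw [div_lt_iff₀ hc₀] at h₁
      exact ⟨h₀, by linarith⟩
    · have := hind i hi j hj hij
      rw [hadj, not_and, not_le] at this
      exact this hij
  exact ⟨td, hbound, Nat.sInf_le ⟨td, hbound⟩⟩

/-- the intersection graph of a finite family of closed disks of common radius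
`c ≥ 1` contained in an axis-aligned rectangle of width at most `ℓ - 1` has a tree
decomposition of independence number at most `2·⌈ℓ/c⌉`. -/
theorem stmt17 {ι : Type} [Fintype ι] (l : ℕ) (hl : 1 ≤ l) (c : ℝ) (hc : 1 ≤ c)
    (ctr : ι → EuclideanSpace ℝ (Fin 2)) (x₀ : ℝ)
    (hwidth : ∀ i, ∀ p ∈ Metric.closedBall (ctr i) c,
      x₀ ≤ p 0 ∧ p 0 ≤ x₀ + ((l : ℝ) - 1)) :
    ∃ td : TreeDecomp (intersectionGraph fun i => Metric.closedBall (ctr i) c),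
      td.IndepNumLE (2 * ⌈(l : ℝ) / c⌉).toNat ∧
      treeAlpha (intersectionGraph fun i => Metric.closedBall (ctr i) c) ≤
        (2 * ⌈(l : ℝ) / c⌉).toNat :=
  stmt17_general l c hc ctr x₀ hwidth
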